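/- arXiv:2212.10070 — 2 statements merged into one kernel-verified Lean document; each statement's English description precedes it below -/
import Mathlib

section
/- Let ϑ : List ℝ → ℝ be an aggregation function (symmetric and extension-agnostic). Let u and w be nonempty finite lists of real numbers, of lengths T and T' respectively, such that for every real number x, T' · (count of x in u) = T · (count of x in w) (equivalently, u and w have the same empirical distribution). Then ϑ(u) = ϑ(w). In particular, ϑ induces a well-defined function θ̃ on empirical distributions of finite lists (a distributional aggregation function). -/
lemma count_flatten_replicate (l : List ℝ) (n : ℕ) (x : ℝ) :
    (List.flatten (List.replicate n l)).count x = n * l.count x := by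
  induction n with
  | zero => simp
  | succ k ih => simp [List.replicate_succ, ih, Nat.succ_mul, Nat.add_comm]

/-- An aggregation function (symmetric and extension-agnostic) takes equal
values on any two nonempty lists having the same empirical distribution; hence it induces
a well-defined distributional aggregation function on empirical distributions. -/
theorem aggregation_well_defined_on_edd
    (ϑ : List ℝ → ℝ)
    (hsym : ∀ l l' : List ℝ, List.Perm l l' → ϑ l = ϑ l')
    (hext : ∀ l : List ℝ, ∀ n : ℕ, 0 < n →
      ϑ (List.flatten (List.replicate n l)) = ϑ l)
    (u w : List ℝ) (hu : u ≠ []) (hw : w ≠ [])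
    (h : ∀ x : ℝ, w.length * u.count x = u.length * w.count x) :
    ϑ u = ϑ w := by
  have hperm : List.Perm (List.flatten (List.replicate w.length u))
      (List.flatten (List.replicate u.length w)) := by
    rw [List.perm_iff_count]
    intro x
    rw [count_flatten_replicate, count_flatten_replicate, h x]
  have hu' : 0 < u.length := List.length_pos_iff.mpr hu
  have hw' : 0 < w.length := List.length_pos_iff.mpr hw
  calc ϑ u = ϑ (List.flatten (List.replicate w.length u)) := (hext u w.length hw').symm
    _ = ϑ (List.flatten (List.replicate u.length w)) := hsym _ _ hperm
    _ = ϑ w := hext w u.length hu'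
end

section
/- Let X be a nonempty finite set of decisions, let ι be a finite index set of stakeholders, let u : ι → X → ℝ assign utilities, let ϑ : List ℝ → ℝ be an aggregation function (symmetric and extension-agnostic), let φ : (ι → ℝ) → ℝ, and let T be a positive integer. Then the set of objective values { φ(fun i ↦ ϑ(s.map (u i))) : s a list over X of length T } equals the set { φ(fun i ↦ ϑ(wᵢ(q))) : q : X → ℕ with ∑_{x ∈ X} q(x) = T }, where wᵢ(q) denotes the list in which u i x is repeated q(x) times for each x ∈ X. In particular, the two minimization problems (over length-T decision sequences, and over integer frequency vectors summing to T) have the same infimum of objective values. -/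
open List

lemma perm_flatten_replicate {X : Type*} [Fintype X] [DecidableEq X] (s : List X) :
    s.Perm ((Finset.univ.toList.map fun x : X => List.replicate (s.count x) x).flatten) := by
  rw [List.perm_iff_count]
  intro a
  rw [List.count_flatten, List.map_map]
  have h : ((List.count a ∘ fun x : X => List.replicate (s.count x) x) : X → ℕ)
      = fun x : X => if a = x then s.count x else 0 := by
    funext x
    by_cases hax : a = x
    · simp [List.count_replicate, hax]
    · simp [List.count_replicate, hax, Ne.symm hax]
  rw [h, Finset.sum_map_toList]
  simp

lemma length_flatten_replicate {X : Type*} [Fintype X] (q : X → ℕ) :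
    ((Finset.univ.toList.map fun x : X => List.replicate (q x) x).flatten).length
      = ∑ x : X, q x := by
  rw [List.length_flatten, List.map_map]
  have : ((List.length ∘ fun x : X => List.replicate (q x) x) : X → ℕ) = q := by
    funext x; simp
  rw [this, Finset.sum_map_toList]

lemma map_flatten_replicate {X : Type*} [Fintype X] (q : X → ℕ) (f : X → ℝ) :
    ((Finset.univ.toList.map fun x : X => List.replicate (q x) x).flatten).map f
      = (Finset.univ.toList.map fun x : X => List.replicate (q x) (f x)).flatten := by
  rw [List.map_flatten, List.map_map]
  have : ((List.map f ∘ fun x : X => List.replicate (q x) x) : X → List ℝ)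
      = fun x : X => List.replicate (q x) (f x) := by
    funext x; simp
  rw [this]

/-- The fairness-over-time problem over `T` periods and its
probability-equivalent reformulation attain exactly the same set of objective values:
the set of values `φ (fun i => ϑ (s.map (u i)))` over length-`T` decision lists `s`
equals the set of values obtained from integer frequency vectors `q` summing to `T`,
where stakeholder `i`'s utility list repeats `u i x` exactly `q x` times.
In particular, the two minimization problems have the same infimum. -/
theorem fot_equals_probability_equivalent
    {X : Type*} [Fintype X] [Nonempty X] {ι : Type*} [Fintype ι]
    (u : ι → X → ℝ) (ϑ : List ℝ → ℝ) (φ : (ι → ℝ) → ℝ)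
    (hsym : ∀ l l' : List ℝ, List.Perm l l' → ϑ l = ϑ l')
    (hext : ∀ l : List ℝ, ∀ n : ℕ, 0 < n →
      ϑ (List.flatten (List.replicate n l)) = ϑ l)
    (T : ℕ) (hT : 0 < T) :
    {val : ℝ | ∃ s : List X, s.length = T ∧ val = φ (fun i => ϑ (s.map (u i)))} =
    {val : ℝ | ∃ q : X → ℕ, (∑ x : X, q x) = T ∧
      val = φ (fun i =>
        ϑ (List.flatten (Finset.univ.toList.map
          (fun x : X => List.replicate (q x) (u i x)))))} := by
  classical
  ext val
  simp only [Set.mem_setOf_eq]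
  constructor
  · rintro ⟨s, hlen, rfl⟩
    refine ⟨fun x => s.count x, ?_, ?_⟩
    · rw [← length_flatten_replicate (fun x => s.count x),
        ← (perm_flatten_replicate s).length_eq, hlen]
    · congr 1
      funext i
      apply hsym
      have h := (perm_flatten_replicate s).map (u i)
      rwa [map_flatten_replicate] at h
  · rintro ⟨q, hq, rfl⟩
    refine ⟨(Finset.univ.toList.map fun x : X => List.replicate (q x) x).flatten, ?_, ?_⟩
    · rw [length_flatten_replicate, hq]
    · congr 1
      funext i
      rw [map_flatten_replicate]
end
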